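/- Let A = A₁ + iA₂ be a normal n×n complex matrix (Cartesian decomposition) such that −A₂ ≤ A₁ in the Loewner order. Then for every index j, s_j(A) ≤ s_j( 2(A₁⁺ + A₂⁺) ⊕ (A₁ + A₂) ), where the right-hand matrix is the 2n×2n block diagonal matrix with diagonal blocks 2(A₁⁺ + A₂⁺) and A₁ + A₂. -/

import Mathlib

open Matrix
open scoped ComplexOrder

/-- `singularValues X j` is the `(j+1)`-th largest singular value of `X`, i.e. the
decreasingly ordered square roots of the eigenvalues of `Xᴴ * X`. -/
noncomputable def singularValues {m : ℕ} (X : Matrix (Fin m) (Fin m) ℂ) : Fin m → ℝ :=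
  fun j => Real.sqrt
    ((Matrix.isHermitian_conjTranspose_mul_self X).eigenvalues
      (Tuple.sort (Matrix.isHermitian_conjTranspose_mul_self X).eigenvalues j.rev))

/-- `matAbs X = |X|` is the positive semidefinite square root of `Xᴴ * X`. -/
noncomputable def matAbs {m : ℕ} (X : Matrix (Fin m) (Fin m) ℂ) : Matrix (Fin m) (Fin m) ℂ :=
  (Matrix.posSemidef_conjTranspose_mul_self X).1.eigenvectorUnitary.1 *
    diagonal ((↑) ∘ Real.sqrt ∘ (Matrix.posSemidef_conjTranspose_mul_self X).1.eigenvalues) *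
    (star (Matrix.posSemidef_conjTranspose_mul_self X).1.eigenvectorUnitary : Matrix (Fin m) (Fin m) ℂ)

/-- `dsum X Y = X ⊕ Y` is the block diagonal matrix with diagonal blocks `X` and `Y`. -/
noncomputable def dsum {m : ℕ} (X Y : Matrix (Fin m) (Fin m) ℂ) :
    Matrix (Fin (m + m)) (Fin (m + m)) ℂ :=
  Matrix.reindex finSumFinEquiv finSumFinEquiv (Matrix.fromBlocks X 0 0 Y)

/-- `matPosPart X = X⁺ = (|X| + X)/2`. -/
noncomputable def matPosPart {m : ℕ} (X : Matrix (Fin m) (Fin m) ℂ) : Matrix (Fin m) (Fin m) ℂ :=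
  (2 : ℂ)⁻¹ • (matAbs X + X)

/-- `matNegPart X = X⁻ = (|X| - X)/2`. -/
noncomputable def matNegPart {m : ℕ} (X : Matrix (Fin m) (Fin m) ℂ) : Matrix (Fin m) (Fin m) ℂ :=
  (2 : ℂ)⁻¹ • (matAbs X - X)

/-!
Normality of `A = A₁ + i A₂` says exactly that `A₁` and `A₂` commute, so one unitary `U`
diagonalises both: `A₁ = U diag(a) Uᴴ`, `A₂ = U diag(b) Uᴴ`. Then `A = U diag(a + i b) Uᴴ`,
`2 (A₁⁺ + A₂⁺) = U diag(|a| + a + |b| + b) Uᴴ`, and the Loewner condition reads `a + b ≥ 0`,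
which gives `√(a² + b²) ≤ |a| + a + |b| + b` entrywise. The singular values of `U diag(v) Uᴴ`
are the moduli `|vᵢ|`, and the `j`-th largest entry of a family is at most the `j`-th largest
entry of any family containing an entrywise larger copy of it.
-/

open Unitary

namespace Tuple

open Finset

variable {α : Type*} [LinearOrder α]

theorem le_apply_sort_rev_iff {m : ℕ} (f : Fin m → α) (j : Fin m) (a : α) :
    a ≤ f (sort f j.rev) ↔ (j : ℕ) < #{i | a ≤ f i} := by
  have hanti : Antitone (f ∘ sort f ∘ Fin.rev) :=
    (monotone_sort f).comp_antitone fun _ _ => Fin.rev_le_rev.mpr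
  refine (lt_card_ge_iff_apply_ge_of_antitone hanti (j := j) (a := a)).symm.trans ?_
  congr! 1
  refine card_bij' (fun i _ => sort f i.rev) (fun i _ => ((sort f).symm i).rev)
    ?_ ?_ ?_ ?_ <;> simp

theorem apply_sort_rev_le_of_card_filter_le {m m' : ℕ} (f : Fin m → α) (g : Fin m' → α)
    (hfg : ∀ a, #{i | a ≤ f i} ≤ #{i | a ≤ g i}) {j : Fin m} {j' : Fin m'} (hj : (j' : ℕ) ≤ j) :
    f (sort f j.rev) ≤ g (sort g j'.rev) := by
  have hf := (le_apply_sort_rev_iff f j _).mp le_rfl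
  exact (le_apply_sort_rev_iff g j' _).mpr (by grind [hfg (f (sort f j.rev))])

end Tuple

open Finset in
theorem Finset.card_filter_comp_eq_of_map_eq {ι κ α : Type*} [Fintype ι] [Fintype κ]
    (p : α → Prop) [DecidablePred p] {f : ι → α} {g : κ → α}
    (h : univ.val.map f = univ.val.map g) : #{i | p (f i)} = #{k | p (g k)} := by
  simpa [Multiset.countP_map, card_def] using congrArg (Multiset.countP p) h

open Module.End in
theorem LinearMap.IsSymmetric.exists_orthonormalBasis_eigenvectors_of_commute {𝕜 E : Type*}
    [RCLike 𝕜] [NormedAddCommGroup E] [InnerProductSpace 𝕜 E] [FiniteDimensional 𝕜 E]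
    {S T : E →ₗ[𝕜] E} (hS : S.IsSymmetric) (hT : T.IsSymmetric) (hST : Commute S T) {n : ℕ}
    (hn : Module.finrank 𝕜 E = n) :
    ∃ (b : OrthonormalBasis (Fin n) 𝕜 E) (μ ν : Fin n → ℝ),
      ∀ i, S (b i) = (μ i : 𝕜) • b i ∧ T (b i) = (ν i : 𝕜) • b i := by
  let V : 𝕜 × 𝕜 → Submodule 𝕜 E := fun p => eigenspace S p.2 ⊓ eigenspace T p.1
  have hV : DirectSum.IsInternal V := hS.directSum_isInternal_of_commute hT hST
  -- only finitely many joint eigenspaces are nonzero, and a subordinate basis needs a finite index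
  have hV' : DirectSum.IsInternal fun p : {p // V p ≠ ⊥} => V p :=
    DirectSum.isInternal_ne_bot_iff.mpr hV
  have : Finite {p // V p ≠ ⊥} := (WellFoundedGT.finite_ne_bot_of_iSupIndep
    ((DirectSum.isInternal_submodule_iff_iSupIndep_and_iSup_eq_top V).mp hV).1).to_subtype
  have : Fintype {p // V p ≠ ⊥} := Fintype.ofFinite _
  have hfam := (hS.orthogonalFamily_eigenspace_inf_eigenspace hT).comp
    (Subtype.val_injective (p := fun p => V p ≠ ⊥))
  let b := hV'.subordinateOrthonormalBasis hn hfam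
  let p : Fin n → 𝕜 × 𝕜 := fun i => (hV'.subordinateOrthonormalBasisIndex hn i hfam).1
  have hmem : ∀ i, b i ∈ V (p i) := fun i => hV'.subordinateOrthonormalBasis_subordinate hn i hfam
  have hS_eig : ∀ i, HasEigenvector S (p i).2 (b i) := fun i => ⟨(hmem i).1, b.toBasis.ne_zero i⟩
  have hT_eig : ∀ i, HasEigenvector T (p i).1 (b i) := fun i => ⟨(hmem i).2, b.toBasis.ne_zero i⟩
  refine ⟨b, fun i => RCLike.re (p i).2, fun i => RCLike.re (p i).1, fun i => ⟨?_, ?_⟩⟩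
  · rw [RCLike.conj_eq_iff_re.mp (hS.conj_eigenvalue_eq_self (hasEigenvalue_of_hasEigenvector
      (hS_eig i)))]
    exact (hS_eig i).apply_eq_smul
  · rw [RCLike.conj_eq_iff_re.mp (hT.conj_eigenvalue_eq_self (hasEigenvalue_of_hasEigenvector
      (hT_eig i)))]
    exact (hT_eig i).apply_eq_smul

namespace Matrix

theorem charpoly_conjStarAlgAut {n R : Type*} [Fintype n] [DecidableEq n] [CommRing R]
    [StarRing R] (U : unitaryGroup n R) (X : Matrix n n R) :
    (conjStarAlgAut R _ U X).charpoly = X.charpoly := by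
  rw [conjStarAlgAut_apply, charpoly_mul_comm, ← mul_assoc]
  simp

section RCLike

variable {n 𝕜 : Type*} [Fintype n] [DecidableEq n] [RCLike 𝕜]

open Polynomial in
theorem IsHermitian.map_eigenvalues_eq_of_charpoly_eq {H : Matrix n n 𝕜} (hH : H.IsHermitian)
    {d : n → ℝ} (h : H.charpoly = ∏ i, (X - C (d i : 𝕜))) :
    Finset.univ.val.map hH.eigenvalues = Finset.univ.val.map d := by
  have hroots := hH.roots_charpoly_eq_eigenvalues
  rw [h, roots_prod _ _ (by simp [Finset.prod_ne_zero_iff, X_sub_C_ne_zero])] at hroots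
  simp only [roots_X_sub_C, Multiset.bind_singleton] at hroots
  refine Multiset.map_injective (RCLike.ofReal_injective (K := 𝕜)) ?_
  rw [Multiset.map_map, Multiset.map_map, ← hroots]
  rfl

theorem posSemidef_conjStarAlgAut_iff (U : unitaryGroup n 𝕜) (X : Matrix n n 𝕜) :
    (conjStarAlgAut 𝕜 _ U X).PosSemidef ↔ X.PosSemidef := by
  rw [conjStarAlgAut_apply, star_eq_conjTranspose]
  refine ⟨fun h => ?_, fun h => h.mul_mul_conjTranspose_same _⟩
  have hX : (U : Matrix n n 𝕜)ᴴ * (U * X * (U : Matrix n n 𝕜)ᴴ) * U = X := by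
    simp only [← star_eq_conjTranspose, mul_assoc, Unitary.coe_star_mul_self, mul_one]
    rw [← mul_assoc, Unitary.coe_star_mul_self, one_mul]
  exact hX ▸ h.conjTranspose_mul_mul_same _

theorem conjTranspose_mul_self_conjStarAlgAut_diagonal (U : unitaryGroup n 𝕜) (v : n → 𝕜) :
    (conjStarAlgAut 𝕜 _ U (diagonal v))ᴴ * conjStarAlgAut 𝕜 _ U (diagonal v) =
      conjStarAlgAut 𝕜 _ U (diagonal fun i => ((‖v i‖ ^ 2 : ℝ) : 𝕜)) := by
  rw [← star_eq_conjTranspose, ← map_star, ← map_mul, star_eq_conjTranspose,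
    diagonal_conjTranspose, diagonal_mul_diagonal]
  congr! 3 with i
  simp [RCLike.conj_mul]

open Polynomial in
theorem charpoly_conjTranspose_mul_self_conjStarAlgAut_diagonal (U : unitaryGroup n 𝕜)
    (v : n → 𝕜) :
    ((conjStarAlgAut 𝕜 _ U (diagonal v))ᴴ * conjStarAlgAut 𝕜 _ U (diagonal v)).charpoly =
      ∏ i, (X - C ((‖v i‖ ^ 2 : ℝ) : 𝕜)) := by
  rw [conjTranspose_mul_self_conjStarAlgAut_diagonal, charpoly_conjStarAlgAut, charpoly_diagonal]

open scoped MatrixOrder in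
theorem cfcAbs_conjStarAlgAut_diagonal (U : unitaryGroup n 𝕜) (v : n → 𝕜) :
    CFC.abs (conjStarAlgAut 𝕜 _ U (diagonal v)) =
      conjStarAlgAut 𝕜 _ U (diagonal fun i => ((‖v i‖ : ℝ) : 𝕜)) := by
  refine CFC.sqrt_unique ?_ ?_
  · rw [← map_mul, diagonal_mul_diagonal, star_eq_conjTranspose,
      conjTranspose_mul_self_conjStarAlgAut_diagonal]
    simp [sq]
  · refine ((posSemidef_conjStarAlgAut_iff U _).mpr
      (posSemidef_diagonal_iff.mpr fun i => ?_)).nonneg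
    simp

theorem eq_conjStarAlgAut_diagonal_of_mulVec_col {A : Matrix n n 𝕜} (U : unitaryGroup n 𝕜)
    (μ : n → 𝕜) (h : ∀ j, A *ᵥ (fun i => (U : Matrix n n 𝕜) i j) = μ j • fun i => U i j) :
    A = conjStarAlgAut 𝕜 _ U (diagonal μ) := by
  have hAU : A * U = U * diagonal μ := by
    ext i j
    rw [mul_diagonal]
    simpa [mul_apply, mulVec, dotProduct, mul_comm] using congrFun (h j) i
  rw [conjStarAlgAut_apply, ← hAU, mul_assoc, Unitary.mul_star_self_of_mem U.2, mul_one]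

theorem IsHermitian.exists_unitary_diagonal_of_commute {A B : Matrix n n 𝕜}
    (hA : A.IsHermitian) (hB : B.IsHermitian) (hAB : Commute A B) :
    ∃ (U : unitaryGroup n 𝕜) (a b : n → ℝ),
      A = conjStarAlgAut 𝕜 _ U (diagonal fun i => (a i : 𝕜)) ∧
        B = conjStarAlgAut 𝕜 _ U (diagonal fun i => (b i : 𝕜)) := by
  obtain ⟨c, μ, ν, hc⟩ := (isSymmetric_toEuclideanLin_iff.mpr hA)
    |>.exists_orthonormalBasis_eigenvectors_of_commute (isSymmetric_toEuclideanLin_iff.mpr hB)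
      (hAB.map (toLpLinAlgEquiv 2)) finrank_euclideanSpace
  let e := (Fintype.equivFin n).symm
  let b := c.reindex e
  let U : unitaryGroup n 𝕜 := ⟨(EuclideanSpace.basisFun n 𝕜).toBasis.toMatrix b.toBasis,
    (EuclideanSpace.basisFun n 𝕜).toMatrix_orthonormalBasis_mem_unitary b⟩
  have hcol : ∀ (M : Matrix n n 𝕜) (κ : Fin (Fintype.card n) → ℝ),
      (∀ i, toEuclideanLin M (c i) = (κ i : 𝕜) • c i) →
        M = conjStarAlgAut 𝕜 _ U (diagonal fun i => (κ (e.symm i) : 𝕜)) := by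
    intro M κ hM
    refine eq_conjStarAlgAut_diagonal_of_mulVec_col U _ fun j => ?_
    have hj := congrArg WithLp.ofLp (hM (e.symm j))
    rw [ofLp_toLpLin, toLin'_apply, WithLp.ofLp_smul] at hj
    have hU : (fun i => (U : Matrix n n 𝕜) i j) = (c (e.symm j)).ofLp := by
      ext i
      simp [U, b, Module.Basis.toMatrix_apply]
    rwa [hU]
  exact ⟨U, μ ∘ e.symm, ν ∘ e.symm, hcol A μ fun i => (hc i).1, hcol B ν fun i => (hc i).2⟩

end RCLike

end Matrix

theorem commute_of_commute_sub_I_smul_add_I_smul {R : Type*} [Ring R] [Algebra ℂ R] {a b : R}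
    (h : Commute (a - Complex.I • b) (a + Complex.I • b)) : Commute a b := by
  have key : (2 * Complex.I) • (a * b - b * a) = 0 := by
    rw [← sub_eq_zero.mpr h.eq]
    simp only [mul_add, add_mul, mul_sub, sub_mul, smul_mul_assoc, mul_smul_comm]
    module
  exact sub_eq_zero.mp ((smul_eq_zero.mp key).resolve_left (by simp))

theorem Complex.norm_add_mul_I_le_of_add_nonneg {a b : ℝ} (hab : 0 ≤ a + b) :
    ‖(a + b * I : ℂ)‖ ≤ |a| + a + (|b| + b) := by
  rw [norm_add_mul_I, Real.sqrt_le_iff]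
  constructor
  · linarith [neg_abs_le a, neg_abs_le b]
  · rcases le_total 0 a with ha | ha <;> rcases le_total 0 b with hb | hb <;>
      simp only [abs_of_nonneg, abs_of_nonpos, ha, hb] <;> nlinarith

open scoped MatrixOrder in
theorem matAbs_eq_cfcAbs {m : ℕ} (X : Matrix (Fin m) (Fin m) ℂ) : matAbs X = CFC.abs X := by
  rw [CFC.abs, CFC.sqrt_eq_cfc, cfc_nnreal_eq_real _ (star X * X), star_eq_conjTranspose,
    (posSemidef_conjTranspose_mul_self X).1.cfc_eq]
  simp [IsHermitian.cfc, matAbs, Function.comp_def,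
    (posSemidef_conjTranspose_mul_self X).eigenvalues_nonneg]

theorem matPosPart_conjStarAlgAut_diagonal {m : ℕ} (U : unitaryGroup (Fin m) ℂ)
    (v : Fin m → ℂ) :
    matPosPart (conjStarAlgAut ℂ _ U (diagonal v)) =
      conjStarAlgAut ℂ _ U (diagonal fun i => 2⁻¹ * ((‖v i‖ : ℂ) + v i)) := by
  rw [matPosPart, matAbs_eq_cfcAbs, cfcAbs_conjStarAlgAut_diagonal, ← map_add, ← map_smul,
    diagonal_add, ← diagonal_smul]
  rfl

section dsum

variable {m : ℕ} (X Y : Matrix (Fin m) (Fin m) ℂ)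

theorem charpoly_dsum : (dsum X Y).charpoly = X.charpoly * Y.charpoly := by
  rw [dsum, charpoly_reindex, charpoly_fromBlocks_zero₁₂]

theorem conjTranspose_mul_self_dsum : (dsum X Y)ᴴ * dsum X Y = dsum (Xᴴ * X) (Yᴴ * Y) := by
  simp [dsum, fromBlocks_conjTranspose, fromBlocks_multiply]

end dsum

open Finset Polynomial in
theorem singularValues_le_singularValues_dsum {m : ℕ} (U W V : unitaryGroup (Fin m) ℂ)
    {v w : Fin m → ℂ} (z : Fin m → ℂ) (h : ∀ i, ‖v i‖ ≤ ‖w i‖) (j : Fin m) :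
    singularValues (conjStarAlgAut ℂ _ U (diagonal v)) j ≤
      singularValues (dsum (conjStarAlgAut ℂ _ W (diagonal w))
        (conjStarAlgAut ℂ _ V (diagonal z))) (Fin.castAdd m j) := by
  set M := dsum (conjStarAlgAut ℂ _ W (diagonal w)) (conjStarAlgAut ℂ _ V (diagonal z))
  obtain ⟨d, hd⟩ : ∃ d : Fin (m + m) → ℝ, d = Fin.append (‖w ·‖ ^ 2) (‖z ·‖ ^ 2) := ⟨_, rfl⟩
  have hM : (Mᴴ * M).charpoly = ∏ k, (X - C (d k : ℂ)) := by
    rw [conjTranspose_mul_self_dsum, charpoly_dsum,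
      charpoly_conjTranspose_mul_self_conjStarAlgAut_diagonal,
      charpoly_conjTranspose_mul_self_conjStarAlgAut_diagonal, Fin.prod_univ_add]
    simp only [hd, Fin.append_left, Fin.append_right]
    rfl
  refine Real.sqrt_le_sqrt (Tuple.apply_sort_rev_le_of_card_filter_le _ _ (fun a => ?_) (by simp))
  rw [card_filter_comp_eq_of_map_eq (a ≤ ·) (IsHermitian.map_eigenvalues_eq_of_charpoly_eq _
      (charpoly_conjTranspose_mul_self_conjStarAlgAut_diagonal U v)),
    card_filter_comp_eq_of_map_eq (a ≤ ·) (IsHermitian.map_eigenvalues_eq_of_charpoly_eq _ hM)]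
  refine card_le_card_of_injOn (Fin.castAdd m) (fun i hi => ?_) (Fin.castAdd_injective m m).injOn
  simp only [coe_filter, Set.mem_ofPred_eq, mem_univ, true_and, hd, Fin.append_left] at hi ⊢
  exact hi.trans (by gcongr; exact h i)

/-- Let `A = A₁ + iA₂` be a normal `n×n` complex matrix (Cartesian decomposition) with
`-A₂ ≤ A₁` in the Loewner order. Then for every index `j`,
`s_j(A) ≤ s_j(2(A₁⁺ + A₂⁺) ⊕ (A₁ + A₂))`. -/
theorem stmt_8 {n : ℕ} (A A₁ A₂ : Matrix (Fin n) (Fin n) ℂ)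
    (h1 : A₁.IsHermitian) (h2 : A₂.IsHermitian) (hA : A = A₁ + Complex.I • A₂)
    (hN : Aᴴ * A = A * Aᴴ) (hle : (A₁ - (-A₂)).PosSemidef) (j : Fin n) :
    singularValues A j ≤
      singularValues (dsum ((2 : ℂ) • (matPosPart A₁ + matPosPart A₂)) (A₁ + A₂))
        (Fin.castAdd n j) := by
  have hA_star : Aᴴ = A₁ - Complex.I • A₂ := by
    rw [hA, conjTranspose_add, conjTranspose_smul, h1.eq, h2.eq, Complex.star_def,
      Complex.conj_I, neg_smul, sub_eq_add_neg]
  obtain ⟨U, a, b, rfl, rfl⟩ := h1.exists_unitary_diagonal_of_commute h2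
    (commute_of_commute_sub_I_smul_add_I_smul (hA_star ▸ hA ▸ hN))
  subst hA
  have hab : ∀ i, 0 ≤ a i + b i := by
    rw [sub_neg_eq_add, ← map_add, diagonal_add, posSemidef_conjStarAlgAut_iff,
      posSemidef_diagonal_iff] at hle
    exact fun i => Complex.zero_le_real.mp (by push_cast; exact hle i)
  -- write `A`, `2 (A₁⁺ + A₂⁺)` and `A₁ + A₂` as `U (diagonal _) Uᴴ`
  rw [← map_smul, ← map_add, ← diagonal_smul, diagonal_add, matPosPart_conjStarAlgAut_diagonal,
    matPosPart_conjStarAlgAut_diagonal, ← map_add, ← map_smul, diagonal_add, ← diagonal_smul,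
    ← map_add, diagonal_add]
  refine singularValues_le_singularValues_dsum U U U _ (fun i => ?_) j
  have hβ : 0 ≤ |a i| + a i + (|b i| + b i) := by linarith [neg_abs_le (a i), neg_abs_le (b i)]
  convert Complex.norm_add_mul_I_le_of_add_nonneg (hab i) using 1
  · simp [mul_comm]
  · rw [← Complex.norm_of_nonneg hβ]
    congr 1
    simp
    ring
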